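/- Every point of the velocity polytope is realized: let (G, δ) be a displacement graph in dimension d and suppose G is strongly connected. Then for every point u in the convex hull in ℝ^d of the set of basic velocities of (G, δ), there exists a trajectory f whose velocity exists and equals u. -/

import Mathlib

/-!
Write `u = ∑ wᵢ zᵢ` with `zᵢ` the basic velocity of a cycle `cᵢ`, and join a base vertex `v₀` to
every cycle by paths there and back. The `m`-th block of the trajectory is a closed walk at `v₀`
which, for every `i`, makes the detour to `cᵢ` and runs around it `⌈wᵢ m / |cᵢ|⌉` times. It has
`m + O(1)` edges and its displacement is `m u + O(1)`, the rounding errors being bounded. After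
`M` blocks the trajectory has at least `M² / 2` edges, while it has drifted from the uniform motion
with velocity `u` by only `O(M)`; so after `n` steps the drift is `O(√n)` and the velocity is `u`.
-/

/-- A path in a directed multigraph with source map `s` and target map `t`:
a nonempty list of edges `e₁ … e_n` with `t eᵢ = s eᵢ₊₁`. -/
def IsPathList {V E : Type*} (s t : E → V) (p : List E) : Prop :=
  p ≠ [] ∧ p.Chain' (fun e f => t e = s f)

/-- A cycle: a path `e₁ … e_n` with `s e₁ = t e_n` whose vertices
`s e₁, …, s e_n` are pairwise distinct. -/
def IsCycleList {V E : Type*} (s t : E → V) (p : List E) : Prop :=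
  ∃ h : p ≠ [], p.Chain' (fun e f => t e = s f) ∧
    s (p.head h) = t (p.getLast h) ∧ (p.map s).Nodup

/-- Regard a vector of `ℤ^d` as a point of Euclidean space `ℝ^d`. -/
def toR {d : ℕ} (x : Fin d → ℤ) : EuclideanSpace ℝ (Fin d) := WithLp.toLp 2 (fun i => (x i : ℝ))

/-- A trajectory: a sequence of edges with `s (f (n+1)) = t (f n)`. -/
def IsTrajectory {V E : Type*} (s t : E → V) (f : ℕ → E) : Prop :=
  ∀ n : ℕ, s (f (n + 1)) = t (f n)

/-- `u` is the velocity of the trajectory `f`: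
`(1/n) · ∑_{k=1}^n δ(f k) → u` as `n → ∞`. -/
def HasVelocity {d : ℕ} {E : Type*} (δ : E → Fin d → ℤ) (f : ℕ → E)
    (u : EuclideanSpace ℝ (Fin d)) : Prop :=
  Filter.Tendsto (fun n : ℕ => (n : ℝ)⁻¹ • ∑ k ∈ Finset.Icc 1 n, toR (δ (f k)))
    Filter.atTop (nhds u)

/-- The set of basic velocities `δ(c)/|c|` of cycles `c`. -/
def basicVelocities {d : ℕ} {V E : Type*} (s t : E → V) (δ : E → Fin d → ℤ) :
    Set (EuclideanSpace ℝ (Fin d)) :=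
  {u | ∃ c : List E, IsCycleList s t c ∧ u = (c.length : ℝ)⁻¹ • toR (c.map δ).sum}

/-- The set of all velocities of trajectories. -/
def velocitySet {d : ℕ} {V E : Type*} (s t : E → V) (δ : E → Fin d → ℤ) :
    Set (EuclideanSpace ℝ (Fin d)) :=
  {u | ∃ f : ℕ → E, IsTrajectory s t f ∧ HasVelocity δ f u}

/-- `p` is a path from vertex `a` to vertex `b`. -/
def PathFrom {V E : Type*} (s t : E → V) (a b : V) (p : List E) : Prop :=
  ∃ h : p ≠ [], p.Chain' (fun e f => t e = s f) ∧ s (p.head h) = a ∧ t (p.getLast h) = b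

/-- Strong connectivity: any vertex can be reached from any vertex by a path. -/
def StronglyConnected {V E : Type*} (s t : E → V) : Prop :=
  ∀ v w : V, ∃ p : List E, PathFrom s t v w p

open Finset Filter Topology

section Walks

variable {V E : Type*} {s t : E → V}

lemma PathFrom.append {a b c : V} {p q : List E} (hp : PathFrom s t a b p)
    (hq : PathFrom s t b c q) : PathFrom s t a c (p ++ q) := by
  obtain ⟨hp0, hpc, rfl, rfl⟩ := hp
  obtain ⟨hq0, hqc, hqh, rfl⟩ := hq
  refine ⟨by simp [hp0], List.isChain_append.2 ⟨hpc, hqc, ?_⟩, by simp [hp0], by simp [hq0]⟩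
  simp [List.getLast?_eq_some_getLast hp0, List.head?_eq_some_head hq0, hqh]

lemma PathFrom.append_flatten_replicate_append {a b c : V} {p l q : List E}
    (hp : PathFrom s t a b p) (hl : PathFrom s t b b l) (hq : PathFrom s t b c q) (n : ℕ) :
    PathFrom s t a c (p ++ (List.replicate n l).flatten ++ q) := by
  induction n generalizing p with
  | zero => simpa using hp.append hq
  | succ n ih => simpa [List.replicate_succ] using ih (hp.append hl)

lemma PathFrom.flatMap {ι : Type*} {v : V} {l : List ι} (hl : l ≠ []) {g : ι → List E}
    (hg : ∀ i, PathFrom s t v v (g i)) : PathFrom s t v v (l.flatMap g) := by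
  induction l with
  | nil => exact absurd rfl hl
  | cons i l ih =>
    rcases eq_or_ne l [] with rfl | hl'
    · simpa using hg i
    · simpa using (hg i).append (ih hl')

lemma IsCycleList.exists_pathFrom {c : List E} (hc : IsCycleList s t c) :
    ∃ v, PathFrom s t v v c := by
  obtain ⟨h, hchain, hclosed, -⟩ := hc
  exact ⟨_, h, hchain, rfl, hclosed.symm⟩

end Walks

section CycleBlocks

variable {V E ι : Type*} [Fintype ι] (p c q : ι → List E) (n : ι → ℕ)

noncomputable def cycleBlock : List E :=
  Finset.univ.toList.flatMap fun i => p i ++ (List.replicate (n i) (c i)).flatten ++ q i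

lemma length_cycleBlock : (cycleBlock p c q n).length =
    ∑ i, ((p i).length + (q i).length) + ∑ i, n i * (c i).length := by
  simp [cycleBlock, List.length_flatMap, sum_map_toList, sum_add_distrib]
  abel

lemma sum_map_cycleBlock {M : Type*} [AddCommMonoid M] (g : E → M) :
    ((cycleBlock p c q n).map g).sum =
      ∑ i, (((p i).map g).sum + ((q i).map g).sum) + ∑ i, n i • ((c i).map g).sum := by
  simp [cycleBlock, List.flatMap, sum_map_toList, sum_add_distrib]
  abel

variable {p c q} in
lemma pathFrom_cycleBlock [Nonempty ι] {s t : E → V} {v₀ : V} {v : ι → V}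
    (hp : ∀ i, PathFrom s t v₀ (v i) (p i)) (hc : ∀ i, PathFrom s t (v i) (v i) (c i))
    (hq : ∀ i, PathFrom s t (v i) v₀ (q i)) : PathFrom s t v₀ v₀ (cycleBlock p c q n) :=
  PathFrom.flatMap (by simp [univ_nonempty.ne_empty]) fun i =>
    (hp i).append_flatten_replicate_append (hc i) (hq i) (n i)

end CycleBlocks

section Concatenation

variable {V E : Type*} (B : ℕ → List E)

def concatBlocks : ℕ → List E
  | 0 => []
  | m + 1 => concatBlocks m ++ B m

/-- The infinite concatenation `B 0 ++ B 1 ++ ⋯`; the junk default `e₀` is never read when all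
blocks are nonempty. -/
def concatSeq (e₀ : E) (k : ℕ) : E :=
  (concatBlocks B (k + 1)).getD k e₀

variable {B}

@[simp]
lemma length_concatBlocks_succ (m : ℕ) :
    (concatBlocks B (m + 1)).length = (concatBlocks B m).length + (B m).length := by
  simp [concatBlocks]

lemma concatBlocks_prefix {m M : ℕ} (h : m ≤ M) : concatBlocks B m <+: concatBlocks B M := by
  induction M, h using Nat.le_induction with
  | base => exact List.prefix_rfl
  | succ M _ ih => exact ih.trans (List.prefix_append _ _)

lemma le_length_concatBlocks (hB : ∀ m, B m ≠ []) (M : ℕ) : M ≤ (concatBlocks B M).length := by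
  induction M with
  | zero => simp [concatBlocks]
  | succ M ih =>
    have := List.length_pos_iff.2 (hB M)
    rw [length_concatBlocks_succ]
    omega

lemma concatSeq_eq_getElem (hB : ∀ m, B m ≠ []) (e₀ : E) {M k : ℕ}
    (hk : k < (concatBlocks B M).length) : concatSeq B e₀ k = (concatBlocks B M)[k] := by
  have hk' : k < (concatBlocks B (k + 1)).length := le_length_concatBlocks hB (k + 1)
  rw [concatSeq, List.getD_eq_getElem _ _ hk']
  rcases le_total (k + 1) M with h | h
  · exact (concatBlocks_prefix h).getElem hk'
  · exact ((concatBlocks_prefix h).getElem hk).symm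

lemma sum_Ico_concatSeq (hB : ∀ m, B m ≠ []) (e₀ : E) {M : Type*} [AddCommMonoid M] (g : E → M)
    (m : ℕ) : ∑ k ∈ Ico (concatBlocks B m).length (concatBlocks B (m + 1)).length,
      g (concatSeq B e₀ k) = ((B m).map g).sum := by
  rw [sum_Ico_eq_sum_range, length_concatBlocks_succ, Nat.add_sub_cancel_left, sum_range,
    ← List.ofFn_getElem_eq_map, List.sum_ofFn]
  refine Fintype.sum_congr _ _ fun i => ?_
  rw [concatSeq_eq_getElem hB e₀ (M := m + 1) (by rw [length_concatBlocks_succ]; omega)]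
  simp [concatBlocks, List.getElem_append_right]

lemma pathFrom_concatBlocks {s t : E → V} {v : V} (hB : ∀ m, PathFrom s t v v (B m)) (M : ℕ) :
    PathFrom s t v v (concatBlocks B (M + 1)) := by
  induction M with
  | zero => simpa [concatBlocks] using hB 0
  | succ M ih => exact ih.append (hB (M + 1))

lemma isTrajectory_concatSeq {s t : E → V} {v : V} (hB : ∀ m, PathFrom s t v v (B m)) (e₀ : E) :
    IsTrajectory s t (concatSeq B e₀) := by
  intro k
  have hne : ∀ m, B m ≠ [] := fun m => (hB m).1
  have hk : k + 1 < (concatBlocks B (k + 2)).length := le_length_concatBlocks hne (k + 2)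
  obtain ⟨-, hchain, -⟩ := pathFrom_concatBlocks hB (k + 1)
  rw [concatSeq_eq_getElem hne e₀ hk, concatSeq_eq_getElem hne e₀ (M := k + 2) (by omega)]
  exact (List.isChain_iff_getElem.1 hchain k hk).symm

end Concatenation

section BlockAverages

variable {X : Type*} [NormedAddCommGroup X]

lemma exists_le_lt_succ {N : ℕ → ℕ} {n K : ℕ} (h0 : N 0 ≤ n) (hK : n < N K) :
    ∃ M, N M ≤ n ∧ n < N (M + 1) := by
  classical
  have hex : ∃ M, n < N M := ⟨K, hK⟩
  obtain ⟨M, hM⟩ : ∃ M, Nat.find hex = M + 1 :=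
    Nat.exists_eq_succ_of_ne_zero fun h => (h ▸ Nat.find_spec hex).not_ge h0
  exact ⟨M, not_lt.1 (Nat.find_min hex (by omega)), hM ▸ Nat.find_spec hex⟩

lemma sq_le_two_mul_of_add_lt {N : ℕ → ℕ} (hlow : ∀ m, N m + m < N (m + 1)) (M : ℕ) :
    M ^ 2 ≤ 2 * N M := by
  induction M with
  | zero => simp
  | succ M ih => nlinarith [hlow M]

lemma norm_sum_range_le_mul {x : ℕ → X} {N : ℕ → ℕ} {A : ℝ} (hN0 : N 0 = 0)
    (hmono : Monotone N) (hblock : ∀ m, ‖∑ k ∈ Ico (N m) (N (m + 1)), x k‖ ≤ A) (M : ℕ) :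
    ‖∑ k ∈ range (N M), x k‖ ≤ M * A := by
  induction M with
  | zero => simp [hN0]
  | succ M ih =>
    rw [← sum_range_add_sum_Ico _ (hmono M.le_succ)]
    push_cast
    linarith [norm_add_le_of_le ih (hblock M)]

lemma norm_sum_range_le_sqrt {x : ℕ → X} {N : ℕ → ℕ} {A C : ℝ} {b : ℕ}
    (hx : ∀ k, ‖x k‖ ≤ C) (hN0 : N 0 = 0) (hlow : ∀ m, N m + m < N (m + 1))
    (hup : ∀ m, N (m + 1) ≤ N m + m + b)
    (hblock : ∀ m, ‖∑ k ∈ Ico (N m) (N (m + 1)), x k‖ ≤ A) (n : ℕ) :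
    ‖∑ k ∈ range n, x k‖ ≤ (A + C) * √(2 * n) + b * C := by
  obtain ⟨M, hMn, hnM⟩ := exists_le_lt_succ (hN0.trans_le n.zero_le) (K := n + 1)
    (by have := hlow n; omega)
  have hC : 0 ≤ C := (norm_nonneg _).trans (hx 0)
  have hM : (M : ℝ) ≤ √(2 * n) := by
    rw [Real.le_sqrt (by positivity) (by positivity)]
    exact_mod_cast (sq_le_two_mul_of_add_lt hlow M).trans (by omega)
  have htail : ‖∑ k ∈ Ico (N M) n, x k‖ ≤ (M + b) * C := by
    refine (norm_sum_le_of_le _ fun k _ => hx k).trans ?_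
    rw [sum_const, Nat.card_Ico, nsmul_eq_mul]
    gcongr
    exact_mod_cast (by have := hup M; omega : n - N M ≤ M + b)
  have hmono : Monotone N := monotone_nat_of_le_succ fun m => by have := hlow m; omega
  calc ‖∑ k ∈ range n, x k‖
      = ‖∑ k ∈ range (N M), x k + ∑ k ∈ Ico (N M) n, x k‖ := by
        rw [sum_range_add_sum_Ico _ hMn]
    _ ≤ M * A + (M + b) * C := norm_add_le_of_le (norm_sum_range_le_mul hN0 hmono hblock M) htail
    _ = (A + C) * M + b * C := by ring
    _ ≤ (A + C) * √(2 * n) + b * C := by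
        gcongr
        linarith [(norm_nonneg _).trans (hblock 0)]

lemma tendsto_smul_sum_Icc_of_blocks [NormedSpace ℝ X] {x : ℕ → X} {N : ℕ → ℕ} {A C : ℝ} {b : ℕ}
    (hx : ∀ k, ‖x k‖ ≤ C) (hN0 : N 0 = 0) (hlow : ∀ m, N m + m < N (m + 1))
    (hup : ∀ m, N (m + 1) ≤ N m + m + b)
    (hblock : ∀ m, ‖∑ k ∈ Ico (N m) (N (m + 1)), x k‖ ≤ A) :
    Tendsto (fun n : ℕ => (n : ℝ)⁻¹ • ∑ k ∈ Icc 1 n, x k) atTop (𝓝 0) := by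
  have hsqrt : Tendsto (fun n : ℕ => √(n : ℝ) / n) atTop (𝓝 0) :=
    (tendsto_inv_atTop_zero.comp (Real.tendsto_sqrt_atTop.comp tendsto_natCast_atTop_atTop)).congr'
      (by filter_upwards with n using by simp [Real.sqrt_div_self'])
  have hinv : Tendsto (fun n : ℕ => (n : ℝ)⁻¹) atTop (𝓝 0) :=
    tendsto_inv_atTop_zero.comp tendsto_natCast_atTop_atTop
  have hlim := (hsqrt.const_mul ((A + C) * √2)).add (hinv.const_mul (b * C + 2 * C))
  rw [mul_zero, mul_zero, add_zero] at hlim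
  refine squeeze_zero_norm (fun n => ?_) hlim
  have hIcc : ∑ k ∈ Icc 1 n, x k = ∑ k ∈ range n, x k + x n - x 0 := by
    rw [← Ico_add_one_right_eq_Icc, sum_Ico_eq_sub _ (by omega), sum_range_succ, sum_range_one]
  have hsum : ‖∑ k ∈ Icc 1 n, x k‖ ≤ (A + C) * √(2 * n) + b * C + 2 * C := by
    rw [hIcc]
    linarith [norm_sub_le_of_le (norm_add_le_of_le (norm_sum_range_le_sqrt hx hN0 hlow hup hblock n)
      (hx n)) (hx 0)]
  rw [norm_smul, norm_inv, Real.norm_natCast]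
  calc (n : ℝ)⁻¹ * ‖∑ k ∈ Icc 1 n, x k‖
      ≤ (n : ℝ)⁻¹ * ((A + C) * √(2 * n) + b * C + 2 * C) := by gcongr
    _ = (A + C) * √2 * (√n / n) + (b * C + 2 * C) * (n : ℝ)⁻¹ := by
        rw [Real.sqrt_mul (by norm_num)]; ring

end BlockAverages

section Rounding

variable {ι E : Type*} [Fintype ι]

lemma norm_sum_natCeil_smul_le {X : Type*} [NormedAddCommGroup X] [NormedSpace ℝ X]
    {y : ι → ℝ} (hy : ∀ i, 0 ≤ y i) {H : ι → X} (h : ∑ i, y i • H i = 0) :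
    ‖∑ i, ⌈y i⌉₊ • H i‖ ≤ ∑ i, ‖H i‖ := by
  have hfrac : ∑ i, ⌈y i⌉₊ • H i = ∑ i, ((⌈y i⌉₊ : ℝ) - y i) • H i := by
    simp_rw [sub_smul, sum_sub_distrib, h, sub_zero, Nat.cast_smul_eq_nsmul]
  rw [hfrac]
  refine norm_sum_le_of_le _ fun i _ => ?_
  rw [norm_smul, Real.norm_of_nonneg (sub_nonneg.2 (Nat.le_ceil _))]
  exact mul_le_of_le_one_left (norm_nonneg _) (by linarith [Nat.ceil_lt_add_one (hy i)])

/-- In the `m`-th block the cycle `c i` is run around `⌈w i * m / |c i|⌉` times, so that it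
contributes about `w i * m` edges. -/
noncomputable def cycleTurns (c : ι → List E) (w : ι → ℝ) (m : ℕ) (i : ι) : ℕ :=
  ⌈w i * m / (c i).length⌉₊

variable {c : ι → List E} {w : ι → ℝ}

lemma le_sum_cycleTurns_mul (hc : ∀ i, c i ≠ []) (hw1 : ∑ i, w i = 1) (m : ℕ) :
    m ≤ ∑ i, cycleTurns c w m i * (c i).length := by
  have hle : ∀ i, w i * m ≤ cycleTurns c w m i * (c i).length := fun i => by
    rw [← div_le_iff₀ (by simpa [List.length_pos_iff] using hc i)]
    exact Nat.le_ceil _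
  exact_mod_cast (by simpa [← sum_mul, hw1] using sum_le_sum (s := univ) fun i _ => hle i :
    (m : ℝ) ≤ ∑ i, (cycleTurns c w m i * (c i).length : ℝ))

lemma sum_cycleTurns_mul_le (hc : ∀ i, c i ≠ []) (hw0 : ∀ i, 0 ≤ w i) (hw1 : ∑ i, w i = 1)
    (m : ℕ) : ∑ i, cycleTurns c w m i * (c i).length ≤ m + ∑ i, (c i).length := by
  have hlt : ∀ i, cycleTurns c w m i * (c i).length ≤ w i * m + (c i).length := fun i => by
    have hℓ : (0 : ℝ) < (c i).length := by simpa [List.length_pos_iff] using hc i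
    have := Nat.ceil_lt_add_one (div_nonneg (mul_nonneg (hw0 i) m.cast_nonneg) hℓ.le)
    calc (cycleTurns c w m i : ℝ) * (c i).length ≤ (w i * m / (c i).length + 1) * (c i).length :=
          by unfold cycleTurns; gcongr
      _ = w i * m + (c i).length := by field_simp
  exact_mod_cast (by
    simpa [sum_add_distrib, ← sum_mul, hw1] using sum_le_sum (s := univ) fun i _ => hlt i :
      (∑ i, (cycleTurns c w m i * (c i).length : ℝ)) ≤ m + ∑ i, ((c i).length : ℝ))

variable (p q : ι → List E)

lemma lt_length_cycleBlock [Nonempty ι] (hp : ∀ i, p i ≠ []) (hc : ∀ i, c i ≠ [])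
    (hw1 : ∑ i, w i = 1) (m : ℕ) : m < (cycleBlock p c q (cycleTurns c w m)).length := by
  obtain ⟨i₀⟩ := ‹Nonempty ι›
  have hK : (p i₀).length + (q i₀).length ≤ ∑ i, ((p i).length + (q i).length) :=
    single_le_sum (f := fun i => (p i).length + (q i).length) (fun _ _ => Nat.zero_le _)
      (mem_univ i₀)
  have := List.length_pos_iff.2 (hp i₀)
  have := le_sum_cycleTurns_mul hc hw1 m
  rw [length_cycleBlock]
  omega

lemma length_cycleBlock_le (hc : ∀ i, c i ≠ []) (hw0 : ∀ i, 0 ≤ w i) (hw1 : ∑ i, w i = 1)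
    (m : ℕ) : (cycleBlock p c q (cycleTurns c w m)).length ≤
      m + ∑ i, ((p i).length + (q i).length + (c i).length) := by
  have := sum_cycleTurns_mul_le hc hw0 hw1 m
  rw [length_cycleBlock]
  simp only [sum_add_distrib] at *
  omega

lemma norm_sum_map_cycleBlock_le {X : Type*} [NormedAddCommGroup X] [NormedSpace ℝ X]
    (hw0 : ∀ i, 0 ≤ w i) (g : E → X)
    (hg : ∑ i, (w i / (c i).length) • ((c i).map g).sum = 0) (m : ℕ) :
    ‖((cycleBlock p c q (cycleTurns c w m)).map g).sum‖ ≤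
      ‖∑ i, (((p i).map g).sum + ((q i).map g).sum)‖ + ∑ i, ‖((c i).map g).sum‖ := by
  rw [sum_map_cycleBlock]
  refine norm_add_le_of_le le_rfl (norm_sum_natCeil_smul_le (y := fun i => w i * m / (c i).length)
    (fun i => div_nonneg (mul_nonneg (hw0 i) m.cast_nonneg) (Nat.cast_nonneg _)) ?_)
  simp_rw [mul_div_right_comm, mul_comm _ (m : ℝ), mul_smul, ← smul_sum, hg, smul_zero]

end Rounding

lemma List.sum_map_sub_const {E X : Type*} [AddCommGroup X] (l : List E) (g : E → X) (u : X) :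
    (l.map (g · - u)).sum = (l.map g).sum - l.length • u := by
  induction l with
  | nil => simp
  | cons e l ih => simp [ih, succ_nsmul]; abel

lemma sum_div_length_smul_sum_map_sub_eq_zero {ι E X : Type*} [Fintype ι] [AddCommGroup X]
    [Module ℝ X] {c : ι → List E} (hc : ∀ i, c i ≠ []) {w : ι → ℝ} (hw1 : ∑ i, w i = 1)
    (g : E → X) :
    ∑ i, (w i / (c i).length) •
      ((c i).map (g · - ∑ j, w j • ((c j).length : ℝ)⁻¹ • ((c j).map g).sum)).sum = 0 := by
  have hℓ : ∀ i, ((c i).length : ℝ) ≠ 0 := fun i => by simpa using hc i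
  simp_rw [List.sum_map_sub_const, smul_sub, ← Nat.cast_smul_eq_nsmul ℝ, smul_smul,
    div_mul_cancel₀ _ (hℓ _), sum_sub_distrib, ← sum_smul, hw1, one_smul, div_eq_mul_inv,
    mul_smul, sub_self]

theorem exists_trajectory_tendsto_smul_sum {V E : Type*} [Fintype E] {s t : E → V}
    (hconn : StronglyConnected s t) (v₀ : V) {ι : Type*} [Fintype ι] {c : ι → List E}
    (hc : ∀ i, ∃ v, PathFrom s t v v (c i)) {w : ι → ℝ} (hw0 : ∀ i, 0 ≤ w i)
    (hw1 : ∑ i, w i = 1) {X : Type*} [NormedAddCommGroup X] [NormedSpace ℝ X] (g : E → X) :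
    ∃ f, IsTrajectory s t f ∧ Tendsto (fun n : ℕ => (n : ℝ)⁻¹ • ∑ k ∈ Icc 1 n, g (f k)) atTop
      (𝓝 (∑ i, w i • ((c i).length : ℝ)⁻¹ • ((c i).map g).sum)) := by
  set u := ∑ i, w i • ((c i).length : ℝ)⁻¹ • ((c i).map g).sum
  choose v hv using hc
  choose p hp using fun i => hconn v₀ (v i)
  choose q hq using fun i => hconn (v i) v₀
  have hcne : ∀ i, c i ≠ [] := fun i => (hv i).1
  have : Nonempty ι := by
    by_contra h
    simp [not_nonempty_iff.1 h] at hw1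
  set B := fun m => cycleBlock p c q (cycleTurns c w m)
  have hB : ∀ m, PathFrom s t v₀ v₀ (B m) := fun m => pathFrom_cycleBlock _ hp hv hq
  have hBne : ∀ m, B m ≠ [] := fun m => (hB m).1
  set f := concatSeq B ((B 0).head (hBne 0))
  refine ⟨f, isTrajectory_concatSeq hB _, ?_⟩
  have key := tendsto_smul_sum_Icc_of_blocks (x := fun k => g (f k) - u)
    (N := fun m => (concatBlocks B m).length)
    (fun k => single_le_sum (f := fun e => ‖g e - u‖) (fun _ _ => norm_nonneg _) (mem_univ (f k)))
    rfl (fun m => by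
      rw [length_concatBlocks_succ]
      exact Nat.add_lt_add_left (lt_length_cycleBlock p q (fun i => (hp i).1) hcne hw1 m) _)
    (fun m => by
      rw [length_concatBlocks_succ, add_assoc]
      exact Nat.add_le_add_left (length_cycleBlock_le p q hcne hw0 hw1 m) _)
    (fun m => by
      rw [sum_Ico_concatSeq hBne _ (g · - u) m]; exact norm_sum_map_cycleBlock_le p q hw0 _
        (sum_div_length_smul_sum_map_sub_eq_zero hcne hw1 g) m)
  rw [← tendsto_sub_nhds_zero_iff]
  refine key.congr' ?_
  filter_upwards [eventually_gt_atTop 0] with n hn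
  rw [sum_sub_distrib, sum_const, Nat.card_Icc, smul_sub, ← Nat.cast_smul_eq_nsmul ℝ, smul_smul,
    add_tsub_cancel_right, inv_mul_cancel₀ (by positivity), one_smul]

lemma toR_list_sum {d : ℕ} (l : List (Fin d → ℤ)) : toR l.sum = (l.map toR).sum := by
  induction l with
  | nil => ext; simp [toR]
  | cons x l ih => rw [List.sum_cons, List.map_cons, List.sum_cons, ← ih]; ext; simp [toR]

theorem stmt10_general {d : ℕ} {V E : Type*} [Nonempty V] [Fintype E]
    (s t : E → V) (δ : E → Fin d → ℤ) (hconn : StronglyConnected s t)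
    (u : EuclideanSpace ℝ (Fin d)) (hu : u ∈ convexHull ℝ (basicVelocities s t δ)) :
    ∃ f : ℕ → E, IsTrajectory s t f ∧ HasVelocity δ f u := by
  obtain ⟨ι, _, w, z, hw0, hw1, hz, rfl⟩ := mem_convexHull_iff_exists_fintype.1 hu
  choose c hc hzc using hz
  obtain ⟨f, hf, hvel⟩ := exists_trajectory_tendsto_smul_sum hconn (Classical.arbitrary V)
    (fun i => (hc i).exists_pathFrom) hw0 hw1 (fun e => toR (δ e))
  refine ⟨f, hf, ?_⟩
  simpa [HasVelocity, hzc, toR_list_sum, Function.comp_def] using hvel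

/-- Every point of the velocity polytope is realized: if `G` is strongly
connected, then every point of the convex hull of the basic velocities is the
velocity of some trajectory. -/
theorem stmt10 {d : ℕ} (hd : 1 ≤ d) {V E : Type*} [Fintype V] [Nonempty V] [Fintype E]
    (s t : E → V) (δ : E → Fin d → ℤ) (hconn : StronglyConnected s t)
    (u : EuclideanSpace ℝ (Fin d)) (hu : u ∈ convexHull ℝ (basicVelocities s t δ)) :
    ∃ f : ℕ → E, IsTrajectory s t f ∧ HasVelocity δ f u :=
  stmt10_general s t δ hconn u hu
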